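/- Let A be a subdirectly irreducible BCK-algebra (i.e., it has a smallest nontrivial ideal I). If A has an atom a, then a is the unique atom, a ≤ x for every nonzero x ∈ A, and a ∈ I. -/
import Mathlib


structure BCK (A : Type*) where
  zero : A
  sub : A → A → A
  ax1 : ∀ x y z, sub (sub (sub x y) (sub x z)) (sub z y) = zero
  ax2 : ∀ x, sub x zero = x
  ax3 : ∀ x, sub zero x = zero
  ax4 : ∀ x y, sub x y = zero → sub y x = zero → x = y

def BCK.le {A : Type*} (B : BCK A) (a b : A) : Prop := B.sub a b = B.zero

def BCK.IsAtom {A : Type*} (B : BCK A) (a : A) : Prop :=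
  a ≠ B.zero ∧ ∀ x : A, B.le x a → (x = B.zero ∨ x = a)

def BCK.IsIdeal {A : Type*} (B : BCK A) (I : Set A) : Prop :=
  B.zero ∈ I ∧ ∀ a b : A, b ∈ I → B.sub a b ∈ I → a ∈ I

namespace BCK

variable {A : Type*} (B : BCK A)

lemma sub_self (x : A) : B.sub x x = B.zero := by
  have h := B.ax1 x B.zero B.zero
  rwa [B.ax2, B.ax3, B.ax2] at h

lemma sub_le_self (x y : A) : B.sub (B.sub x y) x = B.zero := by
  have h := B.ax1 x y B.zero
  rwa [B.ax2, B.ax3, B.ax2] at h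

lemma star (x z : A) : B.sub (B.sub x (B.sub x z)) z = B.zero := by
  have h := B.ax1 x B.zero z
  rwa [B.ax2, B.ax2] at h

lemma le_trans {x y z : A} (hxy : B.sub x y = B.zero) (hyz : B.sub y z = B.zero) :
    B.sub x z = B.zero := by
  have h := B.ax1 x z y
  rwa [hxy, hyz, B.ax2, B.ax2] at h

lemma mono_right {a b : A} (c : A) (h : B.sub a b = B.zero) :
    B.sub (B.sub c b) (B.sub c a) = B.zero := by
  have h2 := B.ax1 c b a
  rwa [h, B.ax2] at h2

lemma mono_left {a b : A} (c : A) (h : B.sub a b = B.zero) :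
    B.sub (B.sub a c) (B.sub b c) = B.zero := by
  have h2 := B.ax1 a c b
  rwa [h, B.ax2] at h2

lemma exchange_le (x y z : A) :
    B.sub (B.sub (B.sub x y) z) (B.sub (B.sub x z) y) = B.zero := by
  have h1 : B.sub (B.sub x (B.sub x z)) z = B.zero := B.star x z
  have h2 := B.mono_right (B.sub x y) h1
  have h3 := B.ax1 x y (B.sub x z)
  exact B.le_trans h2 h3

lemma exchange (x y z : A) : B.sub (B.sub x y) z = B.sub (B.sub x z) y :=
  B.ax4 _ _ (B.exchange_le x y z) (B.exchange_le x z y)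

def subn (B : BCK A) (x y : A) : ℕ → A
  | 0 => x
  | n+1 => B.subn (B.sub x y) y n

lemma subn_sub (y z : A) : ∀ (n : ℕ) (x : A),
    B.sub (B.subn x y n) z = B.subn (B.sub x z) y n := by
  intro n
  induction n with
  | zero => intro x; rfl
  | succ n ih =>
    intro x
    show B.sub (B.subn (B.sub x y) y n) z = B.subn (B.sub (B.sub x z) y) y n
    rw [ih (B.sub x y), B.exchange]

lemma subn_mono (y : A) : ∀ (n : ℕ) {a b : A}, B.sub a b = B.zero →
    B.sub (B.subn a y n) (B.subn b y n) = B.zero := by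
  intro n
  induction n with
  | zero => intro a b h; exact h
  | succ n ih => intro a b h; exact ih (B.mono_left y h)

lemma subn_add (y : A) : ∀ (n m : ℕ) (x : A),
    B.subn x y (n + m) = B.subn (B.subn x y n) y m := by
  intro n
  induction n with
  | zero => intro m x; rw [Nat.zero_add]; rfl
  | succ n ih =>
    intro m x
    rw [show n + 1 + m = (n + m) + 1 from by omega]
    exact ih m (B.sub x y)

lemma J_ideal (x : A) : B.IsIdeal {c | ∃ n, B.subn c x n = B.zero} := by
  constructor
  · exact ⟨0, rfl⟩
  · rintro c b ⟨m, hm⟩ ⟨n, hn⟩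
    refine ⟨n + m, ?_⟩
    have h1 : B.sub (B.subn c x n) b = B.zero := by
      rw [B.subn_sub]; exact hn
    have h2 := B.subn_mono x m h1
    rw [hm, B.ax2] at h2
    rw [B.subn_add]
    exact h2

lemma J_mem_self (x : A) : x ∈ {c | ∃ n, B.subn c x n = B.zero} :=
  ⟨1, B.sub_self x⟩

end BCK

theorem bck_si_atom_properties {A : Type*} (B : BCK A) (I : Set A)
    (hI : B.IsIdeal I) (hInontriv : I ≠ {B.zero})
    (hImin : ∀ J : Set A, B.IsIdeal J → J ≠ {B.zero} → I ⊆ J)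
    (a : A) (ha : B.IsAtom a) :
    (∀ a' : A, B.IsAtom a' → a' = a) ∧
    (∀ x : A, x ≠ B.zero → B.le a x) ∧
    a ∈ I := by
  have Jne : ∀ x : A, x ≠ B.zero → ({c | ∃ n, B.subn c x n = B.zero} : Set A) ≠ {B.zero} := by
    intro x hx h
    exact hx (by have := B.J_mem_self x; rw [h] at this; exact this)
  -- a ∈ I
  have haI : a ∈ I := by
    obtain ⟨c, hcI, hc0⟩ : ∃ c ∈ I, c ≠ B.zero := by
      by_contra h
      push_neg at h
      apply hInontriv
      ext z
      simp only [Set.mem_singleton_iff]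
      exact ⟨fun hz => h z hz, fun hz => hz ▸ hI.1⟩
    have hsub := hImin _ (B.J_ideal a) (Jne a ha.1) hcI
    obtain ⟨n, hn⟩ := hsub
    clear hcI hc0 hn
    -- redo with an induction carrying c ∈ I, c ≠ 0
    suffices h : ∀ (n : ℕ) (c : A), c ∈ I → c ≠ B.zero → B.subn c a n = B.zero → a ∈ I by
      obtain ⟨c, hcI, hc0⟩ : ∃ c ∈ I, c ≠ B.zero := by
        by_contra h'
        push_neg at h'
        apply hInontriv
        ext z
        simp only [Set.mem_singleton_iff]
        exact ⟨fun hz => h' z hz, fun hz => hz ▸ hI.1⟩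
      obtain ⟨n, hn⟩ := hImin _ (B.J_ideal a) (Jne a ha.1) hcI
      exact h n c hcI hc0 hn
    intro n
    induction n with
    | zero => intro c hcI hc0 h0; exact absurd h0 hc0
    | succ n ih =>
      intro c hcI hc0 hsn
      by_cases hca : B.sub c a = B.zero
      · rcases ha.2 c hca with h | h
        · exact absurd h hc0
        · exact h ▸ hcI
      · have hcaI : B.sub c a ∈ I := hI.2 (B.sub c a) c hcI (by rw [B.sub_le_self]; exact hI.1)
        exact ih (B.sub c a) hcaI hca hsn
  have hle : ∀ x : A, x ≠ B.zero → B.le a x := by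
    intro x hx
    obtain ⟨n, hn⟩ := hImin _ (B.J_ideal x) (Jne x hx) haI
    revert hn
    induction n with
    | zero => intro h0; exact absurd h0 ha.1
    | succ n ih =>
      intro hsn
      rcases ha.2 (B.sub a x) (B.sub_le_self a x) with h | h
      · exact h
      · exact ih (by rw [← h]; exact hsn)
  refine ⟨?_, hle, haI⟩
  intro a' ha'
  have h := hle a' ha'.1
  rcases ha'.2 a h with h0 | h0
  · exact absurd h0 ha.1
  · exact h0.symm
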